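/- arXiv:1109.1042 — 2 statements merged into one kernel-verified Lean document; each statement's English description precedes it below -/
import Mathlib

section
/- Let A be a central ℓ-arrangement over a field K, H_0 ∈ A, and α := α_{H_0}. Then for each p there is an isomorphism of graded S-modules Ω^p(A) ≅ (Ω^{p−1}(A) ∧ (dα/α)) ⊕ (Ω^p(A) ∧ (dα/α)). -/
open MvPolynomial

noncomputable section

/-- The coordinate ring `K[x_1,…,x_n]`. -/
abbrev PolyR (K : Type) [Field K] (n : ℕ) := MvPolynomial (Fin n) K

/-- The field of rational functions on `K^n`. -/
abbrev Frac (K : Type) [Field K] (n : ℕ) := FractionRing (PolyR K n)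

/-- Differential `p`-forms with rational-function coefficients on `K^n`:
a form is determined by its coefficient on `dx_{i_1} ∧ ⋯ ∧ dx_{i_p}` for each
`p`-element subset `{i_1 < ⋯ < i_p}` of the indices. -/
abbrev Form (K : Type) [Field K] (n p : ℕ) := {s : Finset (Fin n) // s.card = p} → Frac K n

variable (K : Type) [Field K] (n : ℕ)

/-- The linear polynomial `Σ aᵢ xᵢ` attached to a covector `a`. -/
def toPoly (a : Fin n → K) : PolyR K n := ∑ i, C (a i) * X i

/-- algebra map into the fraction field -/
def algF : PolyR K n →+* Frac K n := algebraMap _ _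

/-- Wedge product with a 1-form `η = Σ ηᵢ dxᵢ` (as an `F`-linear map on `p`-forms). -/
def wedgeF (η : Fin n → Frac K n) (p : ℕ) : Form K n p →ₗ[Frac K n] Form K n (p+1) where
  toFun ω s := ∑ i ∈ s.1.attach,
    ((-1 : Frac K n) ^ ((s.1.filter (fun j => j < i.1)).card)) * η i.1 *
      ω ⟨s.1.erase i.1, by simp [Finset.card_erase_of_mem i.2, s.2]⟩
  map_add' x y := by
    funext s
    simp [Finset.sum_add_distrib, mul_add]
  map_smul' c x := by
    funext s
    simp only [Pi.smul_apply, smul_eq_mul, RingHom.id_apply, Finset.mul_sum]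
    exact Finset.sum_congr rfl fun i _ => by ring

/-- Wedge product with a 1-form, as an `S`-linear map. -/
def wedgeR (η : Fin n → Frac K n) (p : ℕ) : Form K n p →ₗ[PolyR K n] Form K n (p+1) :=
  (wedgeF K n η p).restrictScalars _

/-- Contraction (interior product) `⟨θ, ω⟩` of a `(p+1)`-form against a derivation
`θ = Σ θᵢ ∂ᵢ`. -/
def contractF (θ : Fin n → Frac K n) {p : ℕ} (ω : Form K n (p+1)) : Form K n p :=
  fun s => ∑ i ∈ (Finset.univ \ s.1).attach,
    ((-1 : Frac K n) ^ ((s.1.filter (fun j => j < i.1)).card)) * θ i.1 *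
      ω ⟨insert i.1 s.1, by
        rcases Finset.mem_sdiff.mp i.2 with ⟨-, h⟩
        simp [Finset.card_insert_of_notMem h, s.2]⟩

/-- The defining polynomial `Q(A,m) = ∏_{H ∈ A} α_H^{m(H)}` of a multiarrangement. -/
def Qp (hyps : Finset (Fin n → K)) (m : (Fin n → K) → ℕ) : PolyR K n :=
  ∏ a ∈ hyps, toPoly K n a ^ m a

/-- Forms with polynomial (regular) coefficients, as a submodule of all rational forms. -/
def regularForms (p : ℕ) : Submodule (PolyR K n) (Form K n p) :=
  Submodule.pi Set.univ fun _ => Subalgebra.toSubmodule (⊥ : Subalgebra (PolyR K n) (Frac K n))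

/-- Scalar multiplication by a fixed rational function, as an `S`-linear map on forms. -/
def scalF (c : Frac K n) (p : ℕ) : Form K n p →ₗ[PolyR K n] Form K n p :=
  (LinearMap.lsmul (Frac K n) (Form K n p) c).restrictScalars _

/-- The 1-form `dα = Σ aᵢ dxᵢ` of a linear form `α = Σ aᵢ xᵢ`. -/
def dForm (a : Fin n → K) : Fin n → Frac K n := fun i => algF K n (C (a i))

/-- The module `Ω^p(A,m)` of logarithmic differential `p`-forms of the multiarrangement
with hyperplanes (given by defining linear forms) `hyps` and multiplicity `m`:
`Ω^p(A,m) = { ω : Q(A,m)·ω is regular, and (Q(A,m)/α_H^{m(H)})·dα_H ∧ ω is regular ∀ H }`. -/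
def logForms (hyps : Finset (Fin n → K)) (m : (Fin n → K) → ℕ) (p : ℕ) :
    Submodule (PolyR K n) (Form K n p) :=
  (regularForms K n p).comap (scalF K n (algF K n (Qp K n hyps m)) p) ⊓
  ⨅ a ∈ hyps, (regularForms K n (p+1)).comap
    ((scalF K n (algF K n (Qp K n hyps m) / (algF K n (toPoly K n a)) ^ m a) (p+1)).comp
      (wedgeR K n (dForm K n a) p))

/-- The module `D(A,m)` of logarithmic derivations: `θ = Σ θᵢ ∂ᵢ` (encoded by the tuple
`(θ₁,…,θₙ) = (θ(x₁),…,θ(xₙ))`) with `α_H^{m(H)} ∣ θ(α_H)` for all `H`. -/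
def logDer (hyps : Finset (Fin n → K)) (m : (Fin n → K) → ℕ) :
    Submodule (PolyR K n) (Fin n → PolyR K n) where
  carrier := {θ | ∀ a ∈ hyps, toPoly K n a ^ m a ∣ ∑ i, C (a i) * θ i}
  add_mem' := by
    intro x y hx hy a ha
    have : (∑ i, C (a i) * (x + y) i) = (∑ i, C (a i) * x i) + ∑ i, C (a i) * y i := by
      simp [mul_add, Finset.sum_add_distrib]
    rw [this]
    exact dvd_add (hx a ha) (hy a ha)
  zero_mem' := by
    intro a ha
    simp
  smul_mem' := by
    intro c x hx a ha
    have : (∑ i, C (a i) * (c • x) i) = c * ∑ i, C (a i) * x i := by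
      simp [Finset.mul_sum, smul_eq_mul]
      exact Finset.sum_congr rfl fun i _ => by ring
    rw [this]
    exact (hx a ha).mul_left c
open Classical in
/-- index of the first nonzero coordinate of a nonzero covector -/
def leadIdx (a : Fin n → K) (h : a ≠ 0) : Fin n :=
  (Finset.univ.filter fun i => a i ≠ 0).min' (by
    obtain ⟨i, hi⟩ := Function.ne_iff.mp h
    exact ⟨i, Finset.mem_filter.mpr ⟨Finset.mem_univ _, hi⟩⟩)

open Classical in
/-- normalization of a covector: rescale so that the first nonzero coordinate is `1`;
two covectors define the same hyperplane iff they have the same normalization. -/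
def normForm (a : Fin n → K) : Fin n → K :=
  if h : a = 0 then 0 else (a (leadIdx K n a h))⁻¹ • a

/-- the covector of the coordinate hyperplane `H₀ = {x_{n+1} = 0}` -/
def kElast : Fin (n+1) → K := fun i => if i = Fin.last n then 1 else 0

/-- restriction of a linear form on `K^{n+1}` to the hyperplane `H₀ = {x_{n+1} = 0} ≅ K^n` -/
def restrictForm (a : Fin (n+1) → K) : Fin n → K := fun i => a i.castSucc

open Classical in
/-- the hyperplanes of the Ziegler restriction onto `H₀ = {x_{n+1} = 0}`:
the (distinct) hyperplanes `H ∩ H₀`, `H ∈ A ∖ {H₀}` -/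
def zieglerHyps (hyps : Finset (Fin (n+1) → K)) : Finset (Fin n → K) :=
  (hyps.erase (kElast K n)).image fun a => normForm K n (restrictForm K n a)

open Classical in
/-- the Ziegler multiplicity: `m(X) = #{H ∈ A ∖ {H₀} : H ∩ H₀ = X}` -/
def zieglerMult (hyps : Finset (Fin (n+1) → K)) (b : Fin n → K) : ℕ :=
  ((hyps.erase (kElast K n)).filter fun a => normForm K n (restrictForm K n a) = b).card

/-- evaluation at `x_{n+1} = 0`, i.e. restriction of polynomials to `H₀` -/
def ev0 : PolyR K (n+1) →ₐ[K] PolyR K n := aeval (Fin.lastCases 0 X)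

/-- a `p`-subset of `Fin n` as a `p`-subset of `Fin (n+1)` -/
def embedSet {p : ℕ} (s : {s : Finset (Fin n) // s.card = p}) :
    {s : Finset (Fin (n+1)) // s.card = p} :=
  ⟨s.1.image Fin.castSucc, by
    rw [Finset.card_image_of_injective _ (Fin.castSucc_injective n), s.2]⟩

/-- `ResRel f f'` : the rational function `f` on `K^{n+1}` is regular along the generic point
of `H₀ = {x_{n+1} = 0}` and restricts to `f'` there. -/
def ResRel (f : Frac K (n+1)) (f' : Frac K n) : Prop :=
  ∃ g h : PolyR K (n+1), ev0 K n h ≠ 0 ∧ algF K (n+1) h * f = algF K (n+1) g ∧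
    f' = algF K n (ev0 K n g) / algF K n (ev0 K n h)

/-- `ResForm ω δ` : writing `ω = σ ∧ (dx_{n+1}/x_{n+1}) + δ₀` with `σ, δ₀` generated by
`dx_1,…,dx_n`, the residue `δ₀|_{H₀}` equals `δ`; i.e. each coefficient of `ω` on a subset
avoiding the last index restricts to the corresponding coefficient of `δ`. -/
def ResForm {p : ℕ} (ω : Form K (n+1) p) (δ : Form K n p) : Prop :=
  ∀ s : {s : Finset (Fin n) // s.card = p}, ResRel K n (ω (embedSet n s)) (δ s)

/-- `M^p ⊆ Ω^p(A'',m)`: the image of the residue map `res : Ω^p(A) → Ω^p(A'',m)`,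
where `(A'',m)` is the Ziegler restriction of the simple arrangement `A` onto `H₀`. -/
def Mres (hyps : Finset (Fin (n+1) → K)) (p : ℕ) : Submodule (PolyR K n) (Form K n p) :=
  Submodule.span (PolyR K n)
    {δ | δ ∈ logForms K n (zieglerHyps K n hyps) (zieglerMult K n hyps) p ∧
      ∃ ω ∈ logForms K (n+1) hyps (fun _ => 1) p, ResForm K n ω δ}

/-- `x ∈ Frac K n` is a homogeneous rational function of degree `d ∈ ℤ` -/
def IsHomog (d : ℤ) (x : Frac K n) : Prop :=
  x = 0 ∨ ∃ (g h : PolyR K n) (dg dh : ℕ), g.IsHomogeneous dg ∧ h.IsHomogeneous dh ∧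
    h ≠ 0 ∧ d = (dg : ℤ) - (dh : ℤ) ∧ x = algF K n g / algF K n h

/-- a form is homogeneous of degree `d` if all its coefficients are homogeneous rational
functions of degree `d` -/
def IsHomogForm {p : ℕ} (d : ℤ) (ω : Form K n p) : Prop := ∀ s, IsHomog K n d (ω s)

/-- the degree-`d` homogeneous component of a (graded) submodule of forms,
as a `K`-vector space -/
def homogComponent {p : ℕ} (N : Submodule (PolyR K n) (Form K n p)) (d : ℤ) :
    Submodule K (Form K n p) :=
  Submodule.span K {ω | ω ∈ N ∧ IsHomogForm K n d ω}

/-- the coefficient function of the Poincaré series `Poin(N,x) = Σ_d dim_K N_d x^d` -/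
def poinFn {p : ℕ} (N : Submodule (PolyR K n) (Form K n p)) : ℤ → ℤ :=
  fun d => (Module.finrank K ↥(homogComponent K n N d) : ℤ)

/-- dimension of a subquotient `Z/(B ∩ Z)` of `K`-vector spaces -/
def quotDim {W : Type} [AddCommGroup W] [Module K W] (Z B : Submodule K W) : ℕ :=
  Module.finrank K (↥Z ⧸ B.comap Z.subtype)

/-- finite-dimensionality of a subquotient `Z/(B ∩ Z)` of `K`-vector spaces -/
def quotFin {W : Type} [AddCommGroup W] [Module K W] (Z B : Submodule K W) : Prop :=
  Module.Finite K (↥Z ⧸ B.comap Z.subtype)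

/-- the degree-`d` homogeneous component of the `p`-graded piece of the quotient `N/M'`
(for `M' ⊆ N` graded), and its dimension: used for `Poin(C^p, x)` -/
def poinQuotFn {p : ℕ} (N M' : Submodule (PolyR K n) (Form K n p)) : ℤ → ℤ :=
  fun d => (quotDim K (homogComponent K n N d) (homogComponent K n M' d) : ℤ)

/-- `seriesCoeff P N j k` : the coefficient of `t^j x^k` in
`Σ_{p=0}^{N} P_p(x) (t(1-x)-1)^p`, where `P_p(x)` has coefficient function `P p : ℤ → ℤ`. -/
def seriesCoeff (P : ℕ → ℤ → ℤ) (N j : ℕ) : ℤ → ℤ := fun k =>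
  ∑ p ∈ Finset.range (N+1), ∑ r ∈ Finset.range (j+1),
    ((-1 : ℤ) ^ (p - j)) * (p.choose j) * ((-1 : ℤ) ^ r) * (j.choose r) * P p (k - r)

/-- `chiCoeff P N j` : the value at `x = 1` (i.e. `Σ_k` of coefficients, when this series
is a Laurent polynomial in `x`) of the `t^j`-coefficient of `Σ_{p=0}^{N} P_p(x)(t(1-x)-1)^p`;
this is the `t^j`-coefficient of `χ = lim_{x→1} Σ_p Poin(Ω^p,x)(t(1-x)-1)^p`. -/
def chiCoeff (P : ℕ → ℤ → ℤ) (N j : ℕ) : ℤ := ∑ᶠ k : ℤ, seriesCoeff P N j k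

/-- the `t^j` coefficient of the characteristic polynomial `χ(A,m,t)` of a
multiarrangement in `K^n` -/
def chiT (hyps : Finset (Fin n → K)) (m : (Fin n → K) → ℕ) (j : ℕ) : ℤ :=
  chiCoeff (fun p => poinFn K n (logForms K n hyps m p)) n j

/-- the value `χ(A,m,-1)` of the characteristic polynomial of a multiarrangement in `K^n` -/
def chiAtNegOne (hyps : Finset (Fin n → K)) (m : (Fin n → K) → ℕ) : ℤ :=
  ∑ j ∈ Finset.range (n+1), (-1) ^ j * chiT K n hyps m j

/-- Whitney's formula for the characteristic polynomial of a central arrangement: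
`χ(A,t) = Σ_{B ⊆ A} (-1)^{|B|} t^{n - rank B} = Σ_{X ∈ L(A)} μ(X) t^{dim X}`. -/
def charPoly (hyps : Finset (Fin n → K)) : Polynomial ℤ :=
  ∑ B ∈ hyps.powerset, Polynomial.C ((-1 : ℤ) ^ B.card) *
    Polynomial.X ^ (n - Module.finrank K ↥(Submodule.span K (↑B : Set (Fin n → K))))

/-- the reduced characteristic polynomial `χ₀(A,t) = χ(A,t)/(t-1)` -/
def charPoly0 (hyps : Finset (Fin n → K)) : Polynomial ℤ :=
  charPoly K n hyps /ₘ (Polynomial.X - Polynomial.C 1)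

/-- `b_i`, defined by `χ₀(A,t) = Σ_{i} (-1)^{n-i} b_{n-i} t^i` for a central arrangement
in `K^{n+1}` (so `χ₀` has degree `n`) -/
def bval (hyps : Finset (Fin (n+1) → K)) (i : ℕ) : ℤ :=
  (-1) ^ i * (charPoly0 K (n+1) hyps).coeff (n - i)

/-- `σ_i`, defined by `χ(A'',m,t) = Σ_i (-1)^{n-i} σ_{n-i} t^i` for the Ziegler restriction
`(A'',m)` (an `n`-multiarrangement) of a central arrangement in `K^{n+1}` -/
def sval (hyps : Finset (Fin (n+1) → K)) (i : ℕ) : ℤ :=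
  (-1) ^ i * chiT K n (zieglerHyps K n hyps) (zieglerMult K n hyps) (n - i)

/-- `projDimLE R M k` : the `R`-module `M` has projective dimension `≤ k`, i.e. it admits a
projective resolution vanishing in homological degrees `> k`. -/
def projDimLE (R : Type) [CommRing R] (M : Type) [AddCommGroup M] [Module R M] (k : ℕ) : Prop :=
  ∃ P : CategoryTheory.ProjectiveResolution (ModuleCat.of R M),
    ∀ i, k < i → CategoryTheory.Limits.IsZero (P.complex.X i)

/-- A multiarrangement `(A,m)` in `K^n` is tame if `pd Ω^p(A,m) ≤ p` for `p = 0,1,…,n`. -/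
def IsTame (hyps : Finset (Fin n → K)) (m : (Fin n → K) → ℕ) : Prop :=
  ∀ p : ℕ, p ≤ n → projDimLE (PolyR K n) ↥(logForms K n hyps m p) p

/-- cocycles in degree `p` of the complex `(N^•, ∧η)` -/
def Zcoh (η : Fin n → Frac K n) (N : ∀ p : ℕ, Submodule (PolyR K n) (Form K n p)) (p : ℕ) :
    Submodule (PolyR K n) (Form K n p) :=
  N p ⊓ LinearMap.ker (wedgeR K n η p)

/-- coboundaries in degree `p` of the complex `(N^•, ∧η)` -/
def Bcoh (η : Fin n → Frac K n) (N : ∀ p : ℕ, Submodule (PolyR K n) (Form K n p)) :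
    ∀ p : ℕ, Submodule (PolyR K n) (Form K n p)
  | 0 => ⊥
  | (p+1) => Submodule.map (wedgeR K n η p) (N p)

/-- `H^p` of the complex `(N^•, ∧η)` is a finite-dimensional `K`-vector space -/
def HFin (η : Fin n → Frac K n) (N : ∀ p : ℕ, Submodule (PolyR K n) (Form K n p)) (p : ℕ) :
    Prop :=
  quotFin K ((Zcoh K n η N p).restrictScalars K) ((Bcoh K n η N p).restrictScalars K)

/-- the simple (constant `1`) multiplicity -/
def oneMult : (Fin n → K) → ℕ := fun _ => 1

/-- the logarithmic forms `Ω^•(A'',m)` of the Ziegler restriction, as a family -/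
def zieglerForms (hyps : Finset (Fin (n+1) → K)) :
    ∀ p : ℕ, Submodule (PolyR K n) (Form K n p) :=
  fun p => logForms K n (zieglerHyps K n hyps) (zieglerMult K n hyps) p

/-- the Euler derivation `θ_E = Σ xᵢ ∂ᵢ` -/
def eulerDer : Fin n → Frac K n := fun i => algF K n (X i)

/-- the 1-form `dα/α = dx_{n+1}/x_{n+1}` for `α = x_{n+1}` -/
def etaZero : Fin (n+1) → Frac K (n+1) :=
  fun i => if i = Fin.last n then (algF K (n+1) (X (Fin.last n)))⁻¹ else 0

/-- the submodule `Ω^p(A) ∧ (dα/α) ⊆ Ω^{p+1}(A)` for `α = x_{n+1}` -/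
def wedgeImage (hyps : Finset (Fin (n+1) → K)) (p : ℕ) :
    Submodule (PolyR K (n+1)) (Form K (n+1) (p+1)) :=
  Submodule.map (wedgeR K (n+1) (etaZero K n) p) (logForms K (n+1) hyps (oneMult K (n+1)) p)

/-- cocycles of the cokernel complex `(C^• = Ω^•(A'',m)/M^•, ∧η̄)`, as a submodule of
`Ω^p(A'',m)`: forms `ω` with `η̄ ∧ ω ∈ M^{p+1}` -/
def ZcohC (hyps : Finset (Fin (n+1) → K)) (η : Fin n → Frac K n) (p : ℕ) :
    Submodule (PolyR K n) (Form K n p) :=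
  zieglerForms K n hyps p ⊓ (Mres K n hyps (p+1)).comap (wedgeR K n η p)

/-- coboundaries of the cokernel complex `(C^•, ∧η̄)`, as a submodule of `Ω^p(A'',m)`:
`η̄ ∧ Ω^{p-1}(A'',m) + M^p` -/
def BcohC (hyps : Finset (Fin (n+1) → K)) (η : Fin n → Frac K n) (p : ℕ) :
    Submodule (PolyR K n) (Form K n p) :=
  Bcoh K n η (zieglerForms K n hyps) p ⊔ Mres K n hyps p

/-- `H^p` of the cokernel complex `(C^•, ∧η̄)` is finite-dimensional over `K` -/
def HFinC (hyps : Finset (Fin (n+1) → K)) (η : Fin n → Frac K n) (p : ℕ) : Prop :=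
  quotFin K ((ZcohC K n hyps η p).restrictScalars K) ((BcohC K n hyps η p).restrictScalars K)

/-- the restriction `η̄ = η|_{H₀}` of a regular 1-form `η` (given by its polynomial
coefficients) to `H₀ = {x_{n+1} = 0}` -/
def restrict1Form (c : Fin (n+1) → PolyR K (n+1)) : Fin n → Frac K n :=
  fun i => algF K n (ev0 K n (c i.castSucc))

/-- a regular 1-form with polynomial coefficients `c` as a 1-form with rational coefficients -/
def ofPoly1Form (c : Fin n → PolyR K n) : Fin n → Frac K n := fun i => algF K n (c i)

/-- the set `{i₁ < … < i_p} ∪ {n+1}` used to read off the `σ`-part of a form -/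
def insertLast {p : ℕ} (s : {s : Finset (Fin n) // s.card = p}) :
    {s : Finset (Fin (n+1)) // s.card = p+1} :=
  ⟨insert (Fin.last n) (embedSet n s).1, by
    rw [Finset.card_insert_of_notMem, (embedSet n s).2]
    intro h
    obtain ⟨j, -, hj⟩ := Finset.mem_image.mp h
    exact absurd hj (Fin.castSucc_lt_last j).ne⟩

/-- `ResW w δ` : the residue map induced on `Ω^p(A) ∧ (dx_{n+1}/x_{n+1})` sends
`w = δ₀ ∧ (dx_{n+1}/x_{n+1})` to `δ = δ₀|_{H₀}`. -/
def ResW {p : ℕ} (w : Form K (n+1) (p+1)) (δ : Form K n p) : Prop :=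
  ∀ s : {s : Finset (Fin n) // s.card = p},
    ResRel K n (((-1 : Frac K (n+1)) ^ p) * algF K (n+1) (X (Fin.last n)) * w (insertLast n s))
      (δ s)

/-- extension of a linear form on `K^d` to `K^d × K^e` (for product arrangements) -/
def ext1 (d e : ℕ) (a : Fin d → K) : Fin (d+e) → K := Fin.append a 0

/-- extension of a linear form on `K^e` to `K^d × K^e` (for product arrangements) -/
def ext2 (d e : ℕ) (b : Fin e → K) : Fin (d+e) → K := Fin.append 0 b

end

/-!
Write `η = dα/α = dx_{n+1}/x_{n+1}` and let `ι` be contraction with the Euler derivation `θ_E`.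
Since `⟨θ_E, η⟩ = 1`, Cartan's formula `ι(η ∧ ω) + η ∧ ιω = ⟨θ_E, η⟩ ω` makes `ι` a contracting
homotopy for `η ∧ ·`; together with `η ∧ η = 0` this shows that `ω ↦ (η ∧ ιω, η ∧ ω)` is an
isomorphism onto `(η ∧ Ω^p) × (η ∧ Ω^{p+1})` with inverse `(u, v) ↦ u + ιv`. Both operators
preserve logarithmic forms: `ι` because `θ_E(α_H) = α_H` for every `H`, and `η ∧ ·` because
`H₀ ∈ A`, so that the coefficients of a logarithmic form off `dx_{n+1}` have no pole along
`H₀`, while `x_{n+1}` is prime to every other `α_H`. On coefficients `η ∧ ·` lowers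
and `ι` raises the degree by one, which makes the isomorphism graded.
-/

open Finset

noncomputable section

variable {K : Type} [Field K]

section Calculus

variable {m : ℕ}

/-- The coefficient of `ω` on `dx_t` for an arbitrary index set `t`; it is `0` unless `#t = p`. -/
def coeffOn {p : ℕ} (ω : Form K m p) (t : Finset (Fin m)) : Frac K m :=
  if h : t.card = p then ω ⟨t, h⟩ else 0

lemma coeffOn_of_card_eq {p : ℕ} (ω : Form K m p) {t : Finset (Fin m)} (h : t.card = p) :
    coeffOn ω t = ω ⟨t, h⟩ :=
  dif_pos h

@[simp]
lemma coeffOn_val {p : ℕ} (ω : Form K m p) (s : {s : Finset (Fin m) // s.card = p}) :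
    coeffOn ω s.1 = ω s :=
  coeffOn_of_card_eq ω s.2

/-- The sign in `dx_i ∧ dx_s = ± dx_{insert i s}` for `i ∉ s`. -/
def insSign {R : Type*} [Ring R] (s : Finset (Fin m)) (i : Fin m) : R :=
  (-1) ^ #(s.filter (· < i))

section insSign

variable {R : Type*} [CommRing R] {s : Finset (Fin m)} {i k : Fin m}

lemma neg_one_pow_mul_self (k : ℕ) : ((-1 : R) ^ k) * (-1) ^ k = 1 := by
  rw [← pow_add, ← two_mul, pow_mul, neg_one_sq, one_pow]

lemma insSign_mul_self : (insSign s i : R) * insSign s i = 1 :=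
  neg_one_pow_mul_self _

@[simp]
lemma insSign_insert_self : (insSign (insert i s) i : R) = insSign s i := by
  simp [insSign, filter_insert]

@[simp]
lemma insSign_erase_self : (insSign (s.erase k) k : R) = insSign s k := by
  simp [insSign, filter_erase]

lemma insSign_insert_of_lt (hi : i ∉ s) (h : i < k) :
    (insSign (insert i s) k : R) = -insSign s k := by
  rw [insSign, insSign, filter_insert, if_pos h, card_insert_of_notMem (by simp [hi]), pow_succ,
    mul_neg_one]

lemma insSign_insert_of_not_lt (h : ¬ i < k) : (insSign (insert i s) k : R) = insSign s k := by
  rw [insSign, insSign, filter_insert, if_neg h]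

lemma insSign_erase_of_lt (hk : k ∈ s) (h : k < i) :
    (insSign (s.erase k) i : R) = -insSign s i := by
  rw [insSign, insSign, filter_erase, ← card_erase_add_one (mem_filter.mpr ⟨hk, h⟩), pow_succ,
    mul_neg_one, neg_neg]

lemma insSign_erase_of_not_lt (h : ¬ k < i) : (insSign (s.erase k) i : R) = insSign s i := by
  rw [insSign, insSign, filter_erase, erase_eq_of_notMem (by simp [h])]

lemma insSign_insert_mul (hi : i ∉ s) (hk : k ∈ s) :
    (insSign s i : R) * insSign (insert i s) k = -(insSign s k * insSign (s.erase k) i) := by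
  have hik : i ≠ k := by rintro rfl; exact hi hk
  rcases hik.lt_or_gt with h | h
  · rw [insSign_insert_of_lt hi h, insSign_erase_of_not_lt (asymm h)]
    ring
  · rw [insSign_insert_of_not_lt (asymm h), insSign_erase_of_lt hk h]
    ring

lemma insSign_erase_mul {j : Fin m} (hj : j ∈ s) (hk : k ∈ s) (hjk : j ≠ k) :
    (insSign s k : R) * insSign (s.erase k) j = -(insSign s j * insSign (s.erase j) k) := by
  rcases hjk.lt_or_gt with h | h
  · rw [insSign_erase_of_not_lt (asymm h), insSign_erase_of_lt hj h]
    ring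
  · rw [insSign_erase_of_lt hk h, insSign_erase_of_not_lt (asymm h)]
    ring

end insSign

lemma wedgeF_apply (η : Fin m → Frac K m) (p : ℕ) (ω : Form K m p)
    (s : {s : Finset (Fin m) // s.card = p + 1}) :
    wedgeF K m η p ω s = ∑ i ∈ s.1, insSign s.1 i * η i * coeffOn ω (s.1.erase i) := by
  refine Eq.trans ?_ (sum_attach s.1 fun i => insSign s.1 i * η i * coeffOn ω (s.1.erase i))
  refine sum_congr rfl fun i _ => ?_
  rw [coeffOn_of_card_eq ω (by simp [card_erase_of_mem i.2, s.2])]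
  rfl

lemma contractF_apply (θ : Fin m → Frac K m) (p : ℕ) (ω : Form K m (p+1))
    (s : {s : Finset (Fin m) // s.card = p}) :
    contractF K m θ ω s = ∑ i ∈ univ \ s.1, insSign s.1 i * θ i * coeffOn ω (insert i s.1) := by
  refine Eq.trans ?_
    (sum_attach (univ \ s.1) fun i => insSign s.1 i * θ i * coeffOn ω (insert i s.1))
  refine sum_congr rfl fun i _ => ?_
  have hi : i.1 ∉ s.1 := (mem_sdiff.mp i.2).2
  rw [coeffOn_of_card_eq ω (by simp [card_insert_of_notMem hi, s.2])]
  rfl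

def contractLinear (θ : Fin m → Frac K m) (p : ℕ) : Form K m (p+1) →ₗ[Frac K m] Form K m p where
  toFun := contractF K m θ
  map_add' x y := by
    funext s
    simp [contractF, sum_add_distrib, mul_add]
  map_smul' c x := by
    funext s
    simp only [contractF, Pi.smul_apply, smul_eq_mul, RingHom.id_apply, mul_sum]
    exact sum_congr rfl fun i _ => by ring

lemma contractF_add (θ : Fin m → Frac K m) {p : ℕ} (ω τ : Form K m (p+1)) :
    contractF K m θ (ω + τ) = contractF K m θ ω + contractF K m θ τ :=
  map_add (contractLinear θ p) ω τ

lemma contractF_zero (θ : Fin m → Frac K m) (p : ℕ) : contractF K m θ (0 : Form K m (p+1)) = 0 :=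
  map_zero (contractLinear θ p)

lemma contractF_wedgeF_apply (θ γ : Fin m → Frac K m) (p : ℕ) (ω : Form K m p)
    (s : {s : Finset (Fin m) // s.card = p}) :
    contractF K m θ (wedgeF K m γ p ω) s =
      ∑ i ∈ univ \ s.1, θ i * γ i * ω s +
        ∑ i ∈ univ \ s.1, ∑ k ∈ s.1, insSign s.1 i * insSign (insert i s.1) k * θ i * γ k *
          coeffOn ω (insert i (s.1.erase k)) := by
  rw [contractF_apply, ← sum_add_distrib]
  refine sum_congr rfl fun i hi => ?_
  have hi : i ∉ s.1 := (mem_sdiff.mp hi).2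
  rw [coeffOn_of_card_eq _ (by simp [card_insert_of_notMem hi, s.2]), wedgeF_apply,
    sum_insert hi, insSign_insert_self, erase_insert hi, coeffOn_val, mul_add, mul_sum]
  congr 1
  · linear_combination (θ i * γ i * ω s) * insSign_mul_self (R := Frac K m) (s := s.1) (i := i)
  · refine sum_congr rfl fun k hk => ?_
    rw [erase_insert_of_ne (by rintro rfl; exact hi hk)]
    ring

lemma wedgeF_contractF_apply (θ γ : Fin m → Frac K m) (p : ℕ) (ω : Form K m (p+1))
    (s : {s : Finset (Fin m) // s.card = p + 1}) :
    wedgeF K m γ p (contractF K m θ ω) s =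
      ∑ k ∈ s.1, θ k * γ k * ω s +
        ∑ k ∈ s.1, ∑ i ∈ univ \ s.1, insSign s.1 k * insSign (s.1.erase k) i * θ i * γ k *
          coeffOn ω (insert i (s.1.erase k)) := by
  rw [wedgeF_apply, ← sum_add_distrib]
  refine sum_congr rfl fun k hk => ?_
  have hcompl : univ \ s.1.erase k = insert k (univ \ s.1) := by
    ext j
    by_cases hj : j = k <;> simp [hj, hk]
  rw [coeffOn_of_card_eq _ (by simp [card_erase_of_mem hk, s.2]), contractF_apply, hcompl,
    sum_insert (by simp [hk]), insSign_erase_self, insert_erase hk, coeffOn_val, mul_add, mul_sum]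
  congr 1
  · linear_combination (θ k * γ k * ω s) * insSign_mul_self (R := Frac K m) (s := s.1) (i := k)
  · exact sum_congr rfl fun i _ => by ring

/-- Cartan's formula. -/
lemma contractF_wedgeF_add_wedgeF_contractF (θ γ : Fin m → Frac K m) (p : ℕ)
    (ω : Form K m (p+1)) :
    contractF K m θ (wedgeF K m γ (p+1) ω) + wedgeF K m γ p (contractF K m θ ω) =
      (∑ i, θ i * γ i) • ω := by
  funext s
  have hcross : ∑ i ∈ univ \ s.1, ∑ k ∈ s.1,
        insSign s.1 i * insSign (insert i s.1) k * θ i * γ k * coeffOn ω (insert i (s.1.erase k)) +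
      ∑ k ∈ s.1, ∑ i ∈ univ \ s.1,
        insSign s.1 k * insSign (s.1.erase k) i * θ i * γ k * coeffOn ω (insert i (s.1.erase k))
      = 0 := by
    rw [sum_comm (s := s.1), ← sum_add_distrib]
    refine sum_eq_zero fun i hi => ?_
    rw [← sum_add_distrib]
    refine sum_eq_zero fun k hk => ?_
    linear_combination (θ i * γ k * coeffOn ω (insert i (s.1.erase k))) *
      insSign_insert_mul (R := Frac K m) (mem_sdiff.mp hi).2 hk
  rw [Pi.add_apply, contractF_wedgeF_apply, wedgeF_contractF_apply, Pi.smul_apply, smul_eq_mul,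
    ← sum_sdiff (subset_univ s.1), add_mul, sum_mul, sum_mul]
  linear_combination hcross

lemma contractF_wedgeF_zero (θ γ : Fin m → Frac K m) (ω : Form K m 0) :
    contractF K m θ (wedgeF K m γ 0 ω) = (∑ i, θ i * γ i) • ω := by
  funext s
  have hs : s.1 = ∅ := card_eq_zero.mp s.2
  rw [contractF_wedgeF_apply, Pi.smul_apply, smul_eq_mul, hs, sum_mul]
  simp

lemma wedgeF_wedgeF_apply (γ η : Fin m → Frac K m) (p : ℕ) (ω : Form K m p)
    (s : {s : Finset (Fin m) // s.card = p + 2}) :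
    wedgeF K m γ (p+1) (wedgeF K m η p ω) s = ∑ k ∈ s.1, ∑ j ∈ s.1.erase k,
      insSign s.1 k * insSign (s.1.erase k) j * γ k * η j * coeffOn ω ((s.1.erase k).erase j) := by
  rw [wedgeF_apply]
  refine sum_congr rfl fun k hk => ?_
  rw [coeffOn_of_card_eq _ (by simp [card_erase_of_mem hk, s.2]), wedgeF_apply, mul_sum]
  exact sum_congr rfl fun j _ => by ring

lemma wedgeF_wedgeF_add_wedgeF_wedgeF (γ η : Fin m → Frac K m) (p : ℕ) (ω : Form K m p) :
    wedgeF K m γ (p+1) (wedgeF K m η p ω) + wedgeF K m η (p+1) (wedgeF K m γ p ω) = 0 := by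
  funext s
  rw [Pi.add_apply, wedgeF_wedgeF_apply, wedgeF_wedgeF_apply, Pi.zero_apply,
    sum_comm' (t' := s.1) (s' := fun j => s.1.erase j) (by aesop), ← sum_add_distrib]
  refine sum_eq_zero fun k hk => ?_
  rw [← sum_add_distrib]
  refine sum_eq_zero fun j hj => ?_
  obtain ⟨hjk, hj⟩ := mem_erase.mp hj
  rw [erase_right_comm (a := k)]
  linear_combination (γ j * η k * coeffOn ω ((s.1.erase j).erase k)) *
    insSign_erase_mul (R := Frac K m) hk hj hjk.symm

end Calculus

section EulerHomotopy

variable {n : ℕ}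

lemma algF_injective {m : ℕ} : Function.Injective (algF K m) :=
  IsFractionRing.injective (PolyR K m) (Frac K m)

lemma algF_X_last_ne_zero : algF K (n+1) (X (Fin.last n)) ≠ 0 :=
  (map_ne_zero_iff _ algF_injective).mpr (X_ne_zero _)

lemma wedgeF_etaZero_apply (p : ℕ) (ω : Form K (n+1) p)
    (s : {s : Finset (Fin (n+1)) // s.card = p+1}) :
    wedgeF K (n+1) (etaZero K n) p ω s =
      if Fin.last n ∈ s.1 then
        (-1) ^ p * (algF K (n+1) (X (Fin.last n)))⁻¹ * coeffOn ω (s.1.erase (Fin.last n))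
      else 0 := by
  rw [wedgeF_apply]
  split_ifs with hs
  · rw [sum_eq_single_of_mem (Fin.last n) hs fun i _ hi => by simp [etaZero, hi]]
    have hsign : #(s.1.filter (· < Fin.last n)) = p := by
      rw [show s.1.filter (· < Fin.last n) = s.1.erase (Fin.last n) by
        ext j; simp [Fin.lt_last_iff_ne_last, and_comm],
        card_erase_of_mem hs, s.2, Nat.add_sub_cancel]
    simp [etaZero, insSign, hsign]
  · refine sum_eq_zero fun i hi => ?_
    simp [etaZero, show i ≠ Fin.last n by rintro rfl; exact hs hi]

lemma wedgeF_etaZero_wedgeF_etaZero (p : ℕ) (ω : Form K (n+1) p) :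
    wedgeF K (n+1) (etaZero K n) (p+1) (wedgeF K (n+1) (etaZero K n) p ω) = 0 := by
  funext s
  rw [wedgeF_etaZero_apply]
  split_ifs with hs
  · rw [coeffOn_of_card_eq _ (by simp [card_erase_of_mem hs, s.2]), wedgeF_etaZero_apply,
      if_neg (notMem_erase _ _), mul_zero, Pi.zero_apply]
  · rfl

lemma sum_eulerDer_mul_etaZero : ∑ i, eulerDer K (n+1) i * etaZero K n i = 1 := by
  rw [sum_eq_single (Fin.last n) (fun i _ hi => by simp [etaZero, hi]) (by simp)]
  simp [eulerDer, etaZero, mul_inv_cancel₀ (algF_X_last_ne_zero (K := K) (n := n))]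

lemma contractF_wedgeF_etaZero_add_wedgeF_etaZero_contractF (p : ℕ) (ω : Form K (n+1) (p+1)) :
    contractF K (n+1) (eulerDer K (n+1)) (wedgeF K (n+1) (etaZero K n) (p+1) ω) +
      wedgeF K (n+1) (etaZero K n) p (contractF K (n+1) (eulerDer K (n+1)) ω) = ω := by
  rw [contractF_wedgeF_add_wedgeF_contractF, sum_eulerDer_mul_etaZero, one_smul]

lemma contractF_wedgeF_etaZero_zero (ω : Form K (n+1) 0) :
    contractF K (n+1) (eulerDer K (n+1)) (wedgeF K (n+1) (etaZero K n) 0 ω) = ω := by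
  rw [contractF_wedgeF_zero, sum_eulerDer_mul_etaZero, one_smul]

lemma wedgeF_etaZero_contractF_wedgeF_etaZero (p : ℕ) (μ : Form K (n+1) p) :
    wedgeF K (n+1) (etaZero K n) p
        (contractF K (n+1) (eulerDer K (n+1)) (wedgeF K (n+1) (etaZero K n) p μ)) =
      wedgeF K (n+1) (etaZero K n) p μ := by
  have h := contractF_wedgeF_etaZero_add_wedgeF_etaZero_contractF p
    (wedgeF K (n+1) (etaZero K n) p μ)
  rwa [wedgeF_etaZero_wedgeF_etaZero, contractF_zero, zero_add] at h

lemma wedgeF_etaZero_contractF_contractF_wedgeF_etaZero (p : ℕ) (ν : Form K (n+1) (p+1)) :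
    wedgeF K (n+1) (etaZero K n) p (contractF K (n+1) (eulerDer K (n+1))
      (contractF K (n+1) (eulerDer K (n+1)) (wedgeF K (n+1) (etaZero K n) (p+1) ν))) = 0 := by
  have h := contractF_wedgeF_etaZero_add_wedgeF_etaZero_contractF p
    (contractF K (n+1) (eulerDer K (n+1)) (wedgeF K (n+1) (etaZero K n) (p+1) ν))
  rwa [wedgeF_etaZero_contractF_wedgeF_etaZero, add_eq_left] at h

end EulerHomotopy

section LinearForms

variable {m n : ℕ}

lemma coeff_toPoly (a : Fin m → K) (i : Fin m) :
    coeff (Finsupp.single i 1) (toPoly K m a) = a i := by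
  classical
  simp [toPoly, coeff_sum, coeff_C_mul, coeff_X, Finsupp.single_eq_single_iff]

lemma toPoly_ne_zero {a : Fin m → K} (ha : a ≠ 0) : toPoly K m a ≠ 0 := by
  intro h
  exact ha (funext fun i => by simpa [h] using (coeff_toPoly a i).symm)

lemma toPoly_kElast : toPoly K (n+1) (kElast K n) = X (Fin.last n) := by
  rw [toPoly, sum_eq_single (Fin.last n) (fun i _ hi => by simp [kElast, hi]) (by simp)]
  simp [kElast]

lemma eq_smul_kElast_of_X_last_dvd {a : Fin (n+1) → K}
    (h : (X (Fin.last n) : PolyR K (n+1)) ∣ toPoly K (n+1) a) :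
    a = a (Fin.last n) • kElast K n := by
  classical
  obtain ⟨c, hc⟩ := h
  funext i
  induction i using Fin.lastCases with
  | last => simp [kElast]
  | cast j =>
    have hj := coeff_toPoly a j.castSucc
    rw [hc, coeff_X_mul', if_neg (by simp [(Fin.castSucc_lt_last j).ne'])] at hj
    simp [kElast, (Fin.castSucc_lt_last j).ne, ← hj]

end LinearForms

section Regular

variable {m : ℕ}

abbrev IsPolynomial (f : Frac K m) : Prop :=
  f ∈ (⊥ : Subalgebra (PolyR K m) (Frac K m))

lemma isPolynomial_neg_one_pow (k : ℕ) : IsPolynomial ((-1 : Frac K m) ^ k) :=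
  pow_mem (neg_mem (one_mem _)) k

lemma isPolynomial_insSign (s : Finset (Fin m)) (i : Fin m) :
    IsPolynomial (insSign s i : Frac K m) :=
  isPolynomial_neg_one_pow _

lemma mem_regularForms_iff {p : ℕ} (ω : Form K m p) :
    ω ∈ regularForms K m p ↔ ∀ s, IsPolynomial (ω s) := by
  simp [regularForms, Submodule.mem_pi]

lemma mem_logForms_oneMult_iff {p : ℕ} (hyps : Finset (Fin m → K)) (ω : Form K m p) :
    ω ∈ logForms K m hyps (oneMult K m) p ↔
      (∀ s, IsPolynomial (algF K m (Qp K m hyps (oneMult K m)) * ω s)) ∧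
        ∀ a ∈ hyps, ∀ s, IsPolynomial (algF K m (Qp K m hyps (oneMult K m)) /
          algF K m (toPoly K m a) * wedgeF K m (dForm K m a) p ω s) := by
  simp [logForms, Submodule.mem_iInf, mem_regularForms_iff, scalF, wedgeR, oneMult]

lemma isPolynomial_mul_contractF {θ : Fin m → Frac K m} (hθ : ∀ i, IsPolynomial (θ i))
    {c : Frac K m} {p : ℕ} {ω : Form K m (p+1)} (hω : ∀ t, IsPolynomial (c * ω t)) (s) :
    IsPolynomial (c * contractF K m θ ω s) := by
  rw [contractF_apply, mul_sum]
  refine sum_mem fun i hi => ?_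
  rw [coeffOn_of_card_eq _ (by simp [card_insert_of_notMem (mem_sdiff.mp hi).2, s.2]),
    show ∀ x y z : Frac K m, c * (x * y * z) = x * y * (c * z) by intros; ring]
  exact mul_mem (mul_mem (isPolynomial_insSign _ _) (hθ i)) (hω _)

lemma isPolynomial_mul_wedgeF {η : Fin m → Frac K m} (hη : ∀ i, IsPolynomial (η i))
    {c : Frac K m} {p : ℕ} {ω : Form K m p} (s : {s : Finset (Fin m) // s.card = p + 1})
    (hω : ∀ i ∈ s.1, IsPolynomial (c * coeffOn ω (s.1.erase i))) :
    IsPolynomial (c * wedgeF K m η p ω s) := by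
  rw [wedgeF_apply, mul_sum]
  refine sum_mem fun i hi => ?_
  rw [show ∀ x y z : Frac K m, c * (x * y * z) = x * y * (c * z) by intros; ring]
  exact mul_mem (mul_mem (isPolynomial_insSign _ _) (hη i)) (hω i hi)

lemma isPolynomial_div_mul {f : Frac K m} {α β : PolyR K m} (hα : α ≠ 0) (hβ : Prime β)
    (hβα : ¬ β ∣ α) (hfα : IsPolynomial (f / algF K m α)) (hfβ : IsPolynomial (f / algF K m β)) :
    IsPolynomial (f / (algF K m α * algF K m β)) := by
  obtain ⟨g, hg⟩ := Algebra.mem_bot.mp hfα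
  obtain ⟨h, hh⟩ := Algebra.mem_bot.mp hfβ
  change algF K m g = _ at hg
  change algF K m h = _ at hh
  have hα' : algF K m α ≠ 0 := (map_ne_zero_iff _ algF_injective).mpr hα
  have hβ' : algF K m β ≠ 0 := (map_ne_zero_iff _ algF_injective).mpr hβ.ne_zero
  have hgh : α * g = β * h := algF_injective <| by
    simp only [map_mul, hg, hh]
    field_simp
  obtain ⟨g', rfl⟩ := (hβ.dvd_or_dvd ⟨h, hgh⟩).resolve_left hβα
  refine Algebra.mem_bot.mpr ⟨g', ?_⟩
  change algF K m g' = _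
  rw [map_mul] at hg
  rw [← div_div, ← hg, mul_div_cancel_left₀ _ hβ']

lemma isPolynomial_eulerDer (i : Fin m) : IsPolynomial (eulerDer K m i) :=
  Algebra.mem_bot.mpr ⟨X i, rfl⟩

lemma isPolynomial_dForm (a : Fin m → K) (i : Fin m) : IsPolynomial (dForm K m a i) :=
  Algebra.mem_bot.mpr ⟨C (a i), rfl⟩

lemma sum_eulerDer_mul_dForm (a : Fin m → K) :
    ∑ i, eulerDer K m i * dForm K m a i = algF K m (toPoly K m a) := by
  simp [toPoly, eulerDer, dForm, mul_comm]

lemma contractF_eulerDer_mem_logForms {hyps : Finset (Fin m → K)} (hne : ∀ a ∈ hyps, a ≠ 0)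
    {p : ℕ} {ω : Form K m (p+1)} (hω : ω ∈ logForms K m hyps (oneMult K m) (p+1)) :
    contractF K m (eulerDer K m) ω ∈ logForms K m hyps (oneMult K m) p := by
  rw [mem_logForms_oneMult_iff] at hω ⊢
  obtain ⟨hQ, hlog⟩ := hω
  refine ⟨isPolynomial_mul_contractF isPolynomial_eulerDer hQ, fun a ha s => ?_⟩
  have hα : algF K m (toPoly K m a) ≠ 0 :=
    (map_ne_zero_iff _ algF_injective).mpr (toPoly_ne_zero (hne a ha))
  have hcartan :=
    congrFun (contractF_wedgeF_add_wedgeF_contractF (eulerDer K m) (dForm K m a) p ω) s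
  rw [Pi.add_apply, Pi.smul_apply, smul_eq_mul, sum_eulerDer_mul_dForm] at hcartan
  rw [eq_sub_of_add_eq' hcartan, mul_sub]
  convert sub_mem (hQ s) (isPolynomial_mul_contractF isPolynomial_eulerDer (hlog a ha) s)
    using 1
  field_simp

end Regular

section WedgeEta

variable {n : ℕ} {hyps : Finset (Fin (n+1) → K)}

lemma wedgeF_dForm_kElast (p : ℕ) (ω : Form K (n+1) p) :
    wedgeF K (n+1) (dForm K (n+1) (kElast K n)) p ω =
      algF K (n+1) (X (Fin.last n)) • wedgeF K (n+1) (etaZero K n) p ω := by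
  funext s
  rw [Pi.smul_apply, smul_eq_mul, wedgeF_apply, wedgeF_apply, mul_sum]
  refine sum_congr rfl fun i _ => ?_
  by_cases h : i = Fin.last n
  · simp only [h, dForm, kElast, etaZero, if_pos, map_one]
    field_simp [algF_X_last_ne_zero (K := K) (n := n)]
  · simp [dForm, kElast, etaZero, h]

lemma isPolynomial_mul_wedgeF_etaZero (h0 : kElast K n ∈ hyps) {p : ℕ} {ω : Form K (n+1) p}
    (hω : ω ∈ logForms K (n+1) hyps (oneMult K (n+1)) p) (s) :
    IsPolynomial
      (algF K (n+1) (Qp K (n+1) hyps (oneMult K (n+1))) * wedgeF K (n+1) (etaZero K n) p ω s) := by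
  have h := (mem_logForms_oneMult_iff hyps ω).mp hω |>.2 _ h0 s
  rw [toPoly_kElast, wedgeF_dForm_kElast, Pi.smul_apply, smul_eq_mul] at h
  convert h using 1
  field_simp [algF_X_last_ne_zero (K := K) (n := n)]

lemma isPolynomial_div_X_last_mul_coeffOn (h0 : kElast K n ∈ hyps) {p : ℕ}
    {ω : Form K (n+1) p} (hω : ω ∈ logForms K (n+1) hyps (oneMult K (n+1)) p)
    {t : Finset (Fin (n+1))} (ht : Fin.last n ∉ t) :
    IsPolynomial (algF K (n+1) (Qp K (n+1) hyps (oneMult K (n+1))) /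
      algF K (n+1) (X (Fin.last n)) * coeffOn ω t) := by
  by_cases hcard : t.card = p
  · have h := isPolynomial_mul_wedgeF_etaZero h0 hω
      ⟨insert (Fin.last n) t, by rw [card_insert_of_notMem ht, hcard]⟩
    rw [wedgeF_etaZero_apply, if_pos (mem_insert_self _ _), erase_insert ht] at h
    convert mul_mem (isPolynomial_neg_one_pow p) h using 1
    linear_combination (-(algF K (n+1) (Qp K (n+1) hyps (oneMult K (n+1)))) *
      (algF K (n+1) (X (Fin.last n)))⁻¹ * coeffOn ω t) *
        neg_one_pow_mul_self (R := Frac K (n+1)) p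
  · rw [coeffOn, dif_neg hcard, mul_zero]
    exact zero_mem _

lemma X_last_not_dvd_toPoly (hdist : ∀ a ∈ hyps, ∀ b ∈ hyps, ∀ c : K, a = c • b → a = b)
    (h0 : kElast K n ∈ hyps) {a : Fin (n+1) → K} (ha : a ∈ hyps) (hak : a ≠ kElast K n) :
    ¬ (X (Fin.last n) : PolyR K (n+1)) ∣ toPoly K (n+1) a :=
  fun h => hak (hdist a ha _ h0 _ (eq_smul_kElast_of_X_last_dvd h))

lemma wedgeF_etaZero_mem_logForms (hne : ∀ a ∈ hyps, a ≠ 0)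
    (hdist : ∀ a ∈ hyps, ∀ b ∈ hyps, ∀ c : K, a = c • b → a = b) (h0 : kElast K n ∈ hyps)
    {p : ℕ} {ω : Form K (n+1) p} (hω : ω ∈ logForms K (n+1) hyps (oneMult K (n+1)) p) :
    wedgeF K (n+1) (etaZero K n) p ω ∈ logForms K (n+1) hyps (oneMult K (n+1)) (p+1) := by
  rw [mem_logForms_oneMult_iff]
  refine ⟨isPolynomial_mul_wedgeF_etaZero h0 hω, fun a ha s => ?_⟩
  by_cases hak : a = kElast K n
  · subst hak
    rw [wedgeF_dForm_kElast, wedgeF_etaZero_wedgeF_etaZero, smul_zero, Pi.zero_apply, mul_zero]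
    exact zero_mem _
  have hanti :=
    congrFun (wedgeF_wedgeF_add_wedgeF_wedgeF (dForm K (n+1) a) (etaZero K n) p ω) s
  rw [Pi.add_apply, Pi.zero_apply] at hanti
  rw [eq_neg_of_add_eq_zero_left hanti, wedgeF_etaZero_apply]
  split_ifs with hs
  swap
  · rw [neg_zero, mul_zero]
    exact zero_mem _
  -- `Q / α_H` clears the denominators of `dα_H ∧ ω` as `ω` is logarithmic, so does `Q / x_{n+1}`
  -- on the part of `ω` off `dx_{n+1}`; since `x_{n+1} ∤ α_H`, so does `Q / (α_H x_{n+1})`.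
  have ht : (s.1.erase (Fin.last n)).card = p + 1 := by simp [card_erase_of_mem hs, s.2]
  have hQ : IsPolynomial (algF K (n+1) (Qp K (n+1) hyps (oneMult K (n+1))) *
      coeffOn (wedgeF K (n+1) (dForm K (n+1) a) p ω) (s.1.erase (Fin.last n)) /
      (algF K (n+1) (toPoly K (n+1) a) * algF K (n+1) (X (Fin.last n)))) := by
    refine isPolynomial_div_mul (toPoly_ne_zero (hne a ha)) MvPolynomial.X_prime
      (X_last_not_dvd_toPoly hdist h0 ha hak) ?_ ?_
    · rw [coeffOn_of_card_eq _ ht, mul_div_right_comm]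
      exact ((mem_logForms_oneMult_iff hyps ω).mp hω).2 a ha _
    · rw [coeffOn_of_card_eq _ ht, mul_div_right_comm]
      exact isPolynomial_mul_wedgeF (isPolynomial_dForm a) _ fun i _ =>
        isPolynomial_div_X_last_mul_coeffOn h0 hω fun h => notMem_erase _ _ (mem_of_mem_erase h)
  convert mul_mem (neg_mem (isPolynomial_neg_one_pow (p+1))) hQ using 1
  field_simp

end WedgeEta

section Homogeneous

variable {m : ℕ}

lemma isHomog_zero (d : ℤ) : IsHomog K m d 0 := Or.inl rfl

lemma isHomog_algF {g : PolyR K m} {d : ℕ} (hg : g.IsHomogeneous d) : IsHomog K m d (algF K m g) :=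
  Or.inr ⟨g, 1, d, 0, hg, isHomogeneous_one _ _, one_ne_zero, by simp, by simp⟩

lemma isHomog_neg_one_pow (k : ℕ) : IsHomog K m 0 ((-1) ^ k) := by
  have h := isHomog_algF (K := K) (isHomogeneous_C (Fin m) ((-1 : K) ^ k))
  simpa only [map_pow, map_neg, map_one, Nat.cast_zero] using h

lemma isHomog_insSign (s : Finset (Fin m)) (i : Fin m) : IsHomog K m 0 (insSign s i) :=
  isHomog_neg_one_pow _

lemma IsHomog.inv {d : ℤ} {x : Frac K m} (hx : IsHomog K m d x) : IsHomog K m (-d) x⁻¹ := by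
  rcases hx with rfl | ⟨g, h, dg, dh, hg, hh, hh0, rfl, rfl⟩
  · simp [isHomog_zero]
  by_cases hg0 : g = 0
  · simp [hg0, isHomog_zero]
  exact Or.inr ⟨h, g, dh, dg, hh, hg, hg0, by ring, by rw [inv_div]⟩

lemma IsHomog.add {d : ℤ} {x y : Frac K m} (hx : IsHomog K m d x) (hy : IsHomog K m d y) :
    IsHomog K m d (x + y) := by
  rcases hx with rfl | ⟨g, h, dg, dh, hg, hh, hh0, hd, rfl⟩
  · simpa using hy
  rcases hy with rfl | ⟨g', h', dg', dh', hg', hh', hh0', hd', rfl⟩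
  · rw [add_zero]
    exact Or.inr ⟨g, h, dg, dh, hg, hh, hh0, hd, rfl⟩
  have hdeg : dh + dg' = dg + dh' := by omega
  refine Or.inr ⟨g * h' + h * g', h * h', dg + dh', dh + dh', (hg.mul hh').add (hdeg ▸ hh.mul hg'),
    hh.mul hh', mul_ne_zero hh0 hh0', by omega, ?_⟩
  have hhF := (map_ne_zero_iff _ (algF_injective (K := K) (m := m))).mpr hh0
  have hhF' := (map_ne_zero_iff _ (algF_injective (K := K) (m := m))).mpr hh0'
  simp only [map_add, map_mul]
  field_simp

lemma IsHomog.mul {d e : ℤ} {x y : Frac K m} (hx : IsHomog K m d x) (hy : IsHomog K m e y) :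
    IsHomog K m (d + e) (x * y) := by
  rcases hx with rfl | ⟨g, h, dg, dh, hg, hh, hh0, rfl, rfl⟩
  · simp [isHomog_zero]
  rcases hy with rfl | ⟨g', h', dg', dh', hg', hh', hh0', rfl, rfl⟩
  · simp [isHomog_zero]
  refine Or.inr ⟨g * g', h * h', dg + dg', dh + dh', hg.mul hg', hh.mul hh', mul_ne_zero hh0 hh0',
    by push_cast; ring, ?_⟩
  rw [map_mul, map_mul, mul_div_mul_comm]

lemma isHomog_sum {d : ℤ} {ι : Type*} (t : Finset ι) {f : ι → Frac K m}
    (hf : ∀ i ∈ t, IsHomog K m d (f i)) : IsHomog K m d (∑ i ∈ t, f i) := by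
  classical
  induction t using Finset.induction_on with
  | empty => exact isHomog_zero d
  | insert a t hat ih =>
    rw [sum_insert hat]
    exact (hf a (mem_insert_self _ _)).add (ih fun i hi => hf i (mem_insert_of_mem hi))

lemma IsHomogForm.add {p : ℕ} {d : ℤ} {ω τ : Form K m p} (hω : IsHomogForm K m d ω)
    (hτ : IsHomogForm K m d τ) : IsHomogForm K m d (ω + τ) :=
  fun s => (hω s).add (hτ s)

lemma IsHomogForm.isHomog_coeffOn {p : ℕ} {d : ℤ} {ω : Form K m p} (hω : IsHomogForm K m d ω)
    (t : Finset (Fin m)) : IsHomog K m d (coeffOn ω t) := by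
  unfold coeffOn
  split_ifs
  exacts [hω _, isHomog_zero d]

lemma IsHomogForm.contractF_eulerDer {p : ℕ} {d : ℤ} {ω : Form K m (p+1)}
    (hω : IsHomogForm K m d ω) : IsHomogForm K m (d + 1) (contractF K m (eulerDer K m) ω) := by
  intro s
  rw [contractF_apply]
  refine isHomog_sum _ fun i _ => ?_
  have h := ((isHomog_insSign s.1 i).mul (isHomog_algF (isHomogeneous_X K i))).mul
    (hω.isHomog_coeffOn (insert i s.1))
  rwa [show (0 : ℤ) + (1 : ℕ) + d = d + 1 by push_cast; ring] at h

end Homogeneous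

section HomogeneousEta

variable {n : ℕ}

lemma IsHomogForm.wedgeF_etaZero {p : ℕ} {d : ℤ} {ω : Form K (n+1) p}
    (hω : IsHomogForm K (n+1) d ω) :
    IsHomogForm K (n+1) (d - 1) (wedgeF K (n+1) (etaZero K n) p ω) := by
  intro s
  rw [wedgeF_etaZero_apply]
  split_ifs
  · convert ((isHomog_neg_one_pow p).mul (isHomog_algF (isHomogeneous_X K (Fin.last n))).inv).mul
      (hω.isHomog_coeffOn (s.1.erase (Fin.last n))) using 1
    ring
  · exact isHomog_zero _

lemma isHomogForm_iff_wedgeF_etaZero_zero {d : ℤ} (ω : Form K (n+1) 0) :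
    IsHomogForm K (n+1) d ω ↔ IsHomogForm K (n+1) (d-1) (wedgeF K (n+1) (etaZero K n) 0 ω) := by
  refine ⟨IsHomogForm.wedgeF_etaZero, fun h => ?_⟩
  simpa [contractF_wedgeF_etaZero_zero] using h.contractF_eulerDer

lemma isHomogForm_iff_wedgeF_etaZero {p : ℕ} {d : ℤ} (ω : Form K (n+1) (p+1)) :
    IsHomogForm K (n+1) d ω ↔
      IsHomogForm K (n+1) d
          (wedgeF K (n+1) (etaZero K n) p (contractF K (n+1) (eulerDer K (n+1)) ω)) ∧
        IsHomogForm K (n+1) (d-1) (wedgeF K (n+1) (etaZero K n) (p+1) ω) := by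
  refine ⟨fun h => ⟨by simpa using h.contractF_eulerDer.wedgeF_etaZero, h.wedgeF_etaZero⟩,
    fun ⟨h1, h2⟩ => ?_⟩
  rw [← contractF_wedgeF_etaZero_add_wedgeF_etaZero_contractF p ω]
  have h2 := h2.contractF_eulerDer
  rw [sub_add_cancel] at h2
  exact h2.add h1

end HomogeneousEta

section Decomposition

variable {n : ℕ} (hyps : Finset (Fin (n+1) → K))

abbrev wedgeEtaLog (p : ℕ) :
    logForms K (n+1) hyps (oneMult K (n+1)) p →ₗ[PolyR K (n+1)] wedgeImage K n hyps p :=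
  (wedgeR K (n+1) (etaZero K n) p).submoduleMap _

abbrev contractEulerLog (hne : ∀ a ∈ hyps, a ≠ 0) (p : ℕ) :
    logForms K (n+1) hyps (oneMult K (n+1)) (p+1) →ₗ[PolyR K (n+1)]
      logForms K (n+1) hyps (oneMult K (n+1)) p :=
  ((contractLinear (eulerDer K (n+1)) p).restrictScalars (PolyR K (n+1))).restrict
    fun _ hω => contractF_eulerDer_mem_logForms hne hω

variable {hyps}

lemma wedgeImage_le_logForms (hne : ∀ a ∈ hyps, a ≠ 0)
    (hdist : ∀ a ∈ hyps, ∀ b ∈ hyps, ∀ c : K, a = c • b → a = b) (h0 : kElast K n ∈ hyps)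
    (p : ℕ) : wedgeImage K n hyps p ≤ logForms K (n+1) hyps (oneMult K (n+1)) (p+1) := by
  rintro _ ⟨ω, hω, rfl⟩
  exact wedgeF_etaZero_mem_logForms hne hdist h0 hω

def logFormsZeroEquiv (hne : ∀ a ∈ hyps, a ≠ 0)
    (hdist : ∀ a ∈ hyps, ∀ b ∈ hyps, ∀ c : K, a = c • b → a = b) (h0 : kElast K n ∈ hyps) :
    logForms K (n+1) hyps (oneMult K (n+1)) 0 ≃ₗ[PolyR K (n+1)] wedgeImage K n hyps 0 :=
  LinearEquiv.ofLinearMap (wedgeEtaLog hyps 0)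
    (contractEulerLog hyps hne 0 ∘ₗ Submodule.inclusion (wedgeImage_le_logForms hne hdist h0 0))
    (LinearMap.ext fun ⟨_, ν, _, hν⟩ => Subtype.ext <| by
      subst hν
      exact wedgeF_etaZero_contractF_wedgeF_etaZero 0 ν)
    (LinearMap.ext fun ω => Subtype.ext <| contractF_wedgeF_etaZero_zero ω.1)

def logFormsSuccEquiv (hne : ∀ a ∈ hyps, a ≠ 0)
    (hdist : ∀ a ∈ hyps, ∀ b ∈ hyps, ∀ c : K, a = c • b → a = b) (h0 : kElast K n ∈ hyps)
    (p : ℕ) :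
    logForms K (n+1) hyps (oneMult K (n+1)) (p+1) ≃ₗ[PolyR K (n+1)]
      wedgeImage K n hyps p × wedgeImage K n hyps (p+1) :=
  LinearEquiv.ofLinearMap
    ((wedgeEtaLog hyps p ∘ₗ contractEulerLog hyps hne p).prod (wedgeEtaLog hyps (p+1)))
    (Submodule.inclusion (wedgeImage_le_logForms hne hdist h0 p) ∘ₗ LinearMap.fst _ _ _ +
      contractEulerLog hyps hne (p+1) ∘ₗ
        Submodule.inclusion (wedgeImage_le_logForms hne hdist h0 (p+1)) ∘ₗ LinearMap.snd _ _ _)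
    (LinearMap.ext fun ⟨⟨_, μ, _, hμ⟩, ⟨_, ν, _, hν⟩⟩ => by
      subst hμ hν
      refine Prod.ext (Subtype.ext ?_) (Subtype.ext ?_) <;>
        simp only [LinearMap.comp_apply, LinearMap.prod_apply, LinearMap.add_apply, map_add]
      · exact (congrArg₂ (· + ·) (wedgeF_etaZero_contractF_wedgeF_etaZero p μ)
          (wedgeF_etaZero_contractF_contractF_wedgeF_etaZero p ν)).trans (add_zero _)
      · exact (congrArg₂ (· + ·) (wedgeF_etaZero_wedgeF_etaZero p μ)
          (wedgeF_etaZero_contractF_wedgeF_etaZero (p+1) ν)).trans (zero_add _))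
    (LinearMap.ext fun ω => Subtype.ext <|
      (add_comm _ _).trans (contractF_wedgeF_etaZero_add_wedgeF_etaZero_contractF p ω.1))

end Decomposition

end

/-- Remark 3.3. Let `A` be a central `(n+1)`-arrangement, `H₀ = {x_{n+1}=0} ∈ A`
and `α := x_{n+1}`. For each `p` there is an isomorphism of graded `S`-modules
`Ω^p(A) ≅ (Ω^{p-1}(A) ∧ (dα/α)) ⊕ (Ω^p(A) ∧ (dα/α))` (we state the case `p = 0`, where
`Ω^{-1} = 0`, separately; a form of coefficient-degree `d` corresponds to a pair of forms of
coefficient-degrees `(d, d-1)`). -/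
theorem statement4 (K : Type) [Field K] (n : ℕ)
    (hyps : Finset (Fin (n+1) → K))
    (hne : ∀ a ∈ hyps, a ≠ 0)
    (hdist : ∀ a ∈ hyps, ∀ b ∈ hyps, ∀ c : K, a = c • b → a = b)
    (h0 : kElast K n ∈ hyps) :
    (∃ e : ↥(logForms K (n+1) hyps (oneMult K (n+1)) 0) ≃ₗ[PolyR K (n+1)]
        ↥(wedgeImage K n hyps 0),
      ∀ (d : ℤ) (ω : ↥(logForms K (n+1) hyps (oneMult K (n+1)) 0)),
        IsHomogForm K (n+1) d (ω : Form K (n+1) 0) ↔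
          IsHomogForm K (n+1) (d-1) ((e ω : Form K (n+1) 1))) ∧
    (∀ p : ℕ, ∃ e : ↥(logForms K (n+1) hyps (oneMult K (n+1)) (p+1)) ≃ₗ[PolyR K (n+1)]
        (↥(wedgeImage K n hyps p) × ↥(wedgeImage K n hyps (p+1))),
      ∀ (d : ℤ) (ω : ↥(logForms K (n+1) hyps (oneMult K (n+1)) (p+1))),
        IsHomogForm K (n+1) d (ω : Form K (n+1) (p+1)) ↔
          (IsHomogForm K (n+1) d ((e ω).1 : Form K (n+1) (p+1)) ∧
            IsHomogForm K (n+1) (d-1) ((e ω).2 : Form K (n+1) (p+2)))) :=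
  ⟨⟨logFormsZeroEquiv hne hdist h0, fun _ ω => isHomogForm_iff_wedgeF_etaZero_zero ω.1⟩,
    fun p => ⟨logFormsSuccEquiv hne hdist h0 p, fun _ ω => isHomogForm_iff_wedgeF_etaZero ω.1⟩⟩
end

section
/- Let A be a central ℓ-arrangement over a field K, H_0 ∈ A with coordinate ring S' = K[x_1,…,x_{ℓ−1}], and (A'',m) the Ziegler restriction of A onto H_0. Let η̄ be a regular 1-form on H_0 such that for every flat X ∈ L(A'') with dim X > 0, the restriction of η̄ to X vanishes only at the origin of X. Then the zero locus of the ideal I(η̄) := { ⟨θ̄, η̄⟩ : θ̄ ∈ D(A'',m) } ⊆ S' is contained in {0}; equivalently, the radical of I(η̄) contains the irrelevant maximal ideal (x_1,…,x_{ℓ−1}) of S'. -/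
open MvPolynomial

/-! Let `v ≠ 0` and let `B` be the hyperplanes of `(A'',m)` containing `v`. Genericity of `η̄`
on the flat `⋂ B` gives a constant vector field `u` tangent to every `H ∈ B` with
`⟨u, η̄⟩(v) ≠ 0`. Multiplying `u` by `Q = ∏_{H ∉ B} α_H^{m(H)}` yields a logarithmic
derivation `θ`, and `⟨θ, η̄⟩(v) = Q(v) ⟨u, η̄⟩(v) ≠ 0` since `Q` does not vanish at `v`. -/

section

variable {K : Type} [Field K] {n : ℕ}

theorem eval_toPoly (v a : Fin n → K) : eval v (toPoly K n a) = ∑ i, a i * v i := by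
  simp [toPoly]

theorem const_mul_prod_mem_logDer {Z S : Finset (Fin n → K)} (m : (Fin n → K) → ℕ)
    {u : Fin n → K} (hu : ∀ a ∈ Z, a ∉ S → ∑ i, a i * u i = 0) :
    (fun i => C (u i) * ∏ a ∈ S, toPoly K n a ^ m a) ∈ logDer K n Z m := by
  intro a ha
  have hsum : ∑ i, C (a i) * (C (u i) * ∏ b ∈ S, toPoly K n b ^ m b) =
      C (∑ i, a i * u i) * ∏ b ∈ S, toPoly K n b ^ m b := by
    simp only [map_sum, map_mul, Finset.sum_mul, mul_assoc]
  rw [hsum]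
  by_cases haS : a ∈ S
  · exact (Finset.dvd_prod_of_mem _ haS).mul_left _
  · simp [hu a ha haS]

theorem eval_prod_toPoly_pow_ne_zero {S : Finset (Fin n → K)} (m : (Fin n → K) → ℕ)
    {v : Fin n → K} (hv : ∀ a ∈ S, ∑ i, a i * v i ≠ 0) :
    eval v (∏ a ∈ S, toPoly K n a ^ m a) ≠ 0 := by
  simp only [map_prod, map_pow, eval_toPoly]
  exact Finset.prod_ne_zero_iff.mpr fun a ha => pow_ne_zero _ (hv a ha)

theorem eq_zero_of_eval_contract_logDer_eq_zero (Z : Finset (Fin n → K))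
    (m : (Fin n → K) → ℕ) (f : Fin n → PolyR K n)
    (hgen : ∀ B ⊆ Z, ∀ v : Fin n → K, (∀ b ∈ B, ∑ i, b i * v i = 0) → v ≠ 0 →
      ∃ u : Fin n → K, (∀ b ∈ B, ∑ i, b i * u i = 0) ∧ ∑ i, u i * eval v (f i) ≠ 0)
    (v : Fin n → K) (hv : ∀ θ ∈ logDer K n Z m, eval v (∑ i, θ i * f i) = 0) : v = 0 := by
  classical
  by_contra hv0
  set B := Z.filter fun b => ∑ i, b i * v i = 0
  set S := Z.filter fun b => ∑ i, b i * v i ≠ 0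
  set Q := ∏ a ∈ S, toPoly K n a ^ m a
  obtain ⟨u, huB, hu⟩ := hgen B (Finset.filter_subset _ _) v
    (fun b hb => (Finset.mem_filter.mp hb).2) hv0
  have hθ : (fun i => C (u i) * Q) ∈ logDer K n Z m :=
    const_mul_prod_mem_logDer m fun a ha haS =>
      huB a (Finset.mem_filter.mpr ⟨ha, by simpa [S, ha] using haS⟩)
  have hQ : eval v Q ≠ 0 :=
    eval_prod_toPoly_pow_ne_zero m fun a ha => (Finset.mem_filter.mp ha).2
  have hcontract : eval v (∑ i, C (u i) * Q * f i) = eval v Q * ∑ i, u i * eval v (f i) := by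
    simp only [map_sum, map_mul, eval_C, Finset.mul_sum]
    exact Finset.sum_congr rfl fun i _ => by ring
  have hzero : eval v Q * ∑ i, u i * eval v (f i) = 0 := hcontract ▸ hv _ hθ
  exact hu ((mul_eq_zero.mp hzero).resolve_left hQ)

end

theorem statement7_general (K : Type) [Field K] (n : ℕ)
    (hyps : Finset (Fin (n+1) → K))
    (f : Fin n → PolyR K n)
    (hgen : ∀ B ⊆ zieglerHyps K n hyps, ∀ v : Fin n → K,
      (∀ b ∈ B, ∑ i, b i * v i = 0) → v ≠ 0 →
        ∃ u : Fin n → K, (∀ b ∈ B, ∑ i, b i * u i = 0) ∧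
          ∑ i, u i * MvPolynomial.eval v (f i) ≠ 0) :
    ∀ v : Fin n → K,
      (∀ θ ∈ logDer K n (zieglerHyps K n hyps) (zieglerMult K n hyps),
        MvPolynomial.eval v (∑ i, θ i * f i) = 0) → v = 0 :=
  eq_zero_of_eval_contract_logDer_eq_zero _ _ f hgen

/-- from the proof of Proposition 3.5. Let `A` be a central
`(n+1)`-arrangement, `H₀ = {x_{n+1} = 0} ∈ A`, and `(A'',m)` the Ziegler restriction of `A`
onto `H₀`. Let `η̄ = Σ fᵢ dxᵢ` be a regular 1-form on `H₀` such that for every flat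
`X ∈ L(A'')` with `dim X > 0` the restriction of `η̄` to `X` vanishes only at the origin of
`X`. Then the zero locus of `I(η̄) = { ⟨θ̄, η̄⟩ : θ̄ ∈ D(A'',m) }` is contained in `{0}`. -/
theorem statement7 (K : Type) [Field K] (n : ℕ)
    (hyps : Finset (Fin (n+1) → K))
    (hne : ∀ a ∈ hyps, a ≠ 0)
    (hdist : ∀ a ∈ hyps, ∀ b ∈ hyps, ∀ c : K, a = c • b → a = b)
    (h0 : kElast K n ∈ hyps)
    (f : Fin n → PolyR K n)
    (hgen : ∀ B ⊆ zieglerHyps K n hyps, ∀ v : Fin n → K,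
      (∀ b ∈ B, ∑ i, b i * v i = 0) → v ≠ 0 →
        ∃ u : Fin n → K, (∀ b ∈ B, ∑ i, b i * u i = 0) ∧
          ∑ i, u i * MvPolynomial.eval v (f i) ≠ 0) :
    ∀ v : Fin n → K,
      (∀ θ ∈ logDer K n (zieglerHyps K n hyps) (zieglerMult K n hyps),
        MvPolynomial.eval v (∑ i, θ i * f i) = 0) → v = 0 :=
  statement7_general K n hyps f hgen
end
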